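/- Let n ≥ 2 be an integer not divisible by 3 and let j be a positive integer. Then the subgroup of GL(3,ℂ) generated by E, L_n and −F_{0,j} (this is the group Δ(6n², j)) has order 3·2^j·n². -/

import Mathlib

open Matrix

/-- The matrix `E` with entries `E₀₁ = E₁₂ = E₂₀ = 1` and all other entries `0`. -/
noncomputable def Ematrix : Matrix (Fin 3) (Fin 3) ℂ := !![0, 1, 0; 0, 0, 1; 1, 0, 0]

/-- The matrix `L_n = diag(1, ν, ν⁻¹)` with `ν = exp(2πi/n)`. -/
noncomputable def Lmatrix (n : ℕ) : Matrix (Fin 3) (Fin 3) ℂ :=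
  Matrix.diagonal ![1, Complex.exp (2 * (Real.pi : ℂ) * Complex.I / (n : ℂ)),
    (Complex.exp (2 * (Real.pi : ℂ) * Complex.I / (n : ℂ)))⁻¹]

/-- The matrix `F_{m,j}`, with entries `−ξ` in positions `(0,2)`, `(1,1)`, `(2,0)` and `0`
elsewhere, where `ξ = exp(2πi/(3^m·2^j))`. -/
noncomputable def Fmatrix (m j : ℕ) : Matrix (Fin 3) (Fin 3) ℂ :=
  (-(Complex.exp (2 * (Real.pi : ℂ) * Complex.I / ((3 : ℂ) ^ m * (2 : ℂ) ^ j)))) •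
    (!![0, 0, 1; 0, 1, 0; 1, 0, 0] : Matrix (Fin 3) (Fin 3) ℂ)

/-!
Put `c = E L E⁻¹`, `ν = exp(2πi/n)` and `ξ = exp(2πi/2^j)`. The generators satisfy the
relations of `DeltaRelations`: `E` and `F` normalise the abelian group `⟨L, c⟩` of diagonal
matrices, and `F E² = E F`. These relations move any generator past a word `L^a c^b F^m E^t`,
and since the generators have finite order, the group consists of these words with `a, b`
taken mod `n`, `m` mod `2^j` and `t` mod `3`.

The words are pairwise distinct: as a matrix, `L^a c^b F^m E^t` is the diagonal matrix
`ξ^m · diag(ν^b, ν^(a-b), ν^(-a))` times a permutation matrix. The product of the diagonal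
entries is `ξ^(3m)`, which determines `m` because `3` is prime to `2^j`; then the entries
determine `a` and `b`, and the permutation determines `t`. Hence the group has `n · n · 2^j · 3`
elements.
-/

section GroupTheory

variable {G : Type*} [Group G]

theorem Subgroup.coe_closure_eq_of_isOfFinOrder {s S : Set G} (hs : ∀ g ∈ s, IsOfFinOrder g)
    (hS : S ⊆ Subgroup.closure s) (one_mem : 1 ∈ S)
    (mul_mem : ∀ g ∈ s, ∀ x ∈ S, g * x ∈ S) :
    (Subgroup.closure s : Set G) = S := by
  refine subset_antisymm (fun x hx => ?_) hS
  rw [SetLike.mem_coe, ← Subgroup.mem_toSubmonoid,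
    Subgroup.closure_toSubmonoid_of_isOfFinOrder hs] at hx
  induction hx using Submonoid.closure_induction_left with
  | one => exact one_mem
  | mul_left g hg x _ hx => exact mul_mem g hg x hx

theorem zpow_eq_pow_val_intCast {g : G} {N : ℕ} [NeZero N] (hg : g ^ N = 1) (x : ℤ) :
    g ^ x = g ^ (x : ZMod N).val := by
  rw [zpow_eq_zpow_emod' x hg, ← ZMod.val_intCast, zpow_natCast]

theorem pow_eq_pow_val_natCast {g : G} {N : ℕ} (hg : g ^ N = 1) (m : ℕ) :
    g ^ m = g ^ (m : ZMod N).val := by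
  rw [ZMod.val_natCast, ← pow_eq_pow_mod m hg]

end GroupTheory

theorem Matrix.permMatrix_pow {ι R : Type*} [Fintype ι] [DecidableEq ι] [Semiring R]
    (σ : Equiv.Perm ι) (m : ℕ) : (σ ^ m).permMatrix R = σ.permMatrix R ^ m := by
  induction m with
  | zero => simp
  | succ m ih => rw [pow_succ, permMatrix_mul, ih, pow_succ']

theorem Matrix.eq_of_diagonal_mul_permMatrix_eq {ι R : Type*} [Fintype ι] [DecidableEq ι]
    [NonAssocSemiring R] {d d' : ι → R} {σ σ' : Equiv.Perm ι} (hd : ∀ i, d i ≠ 0)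
    (h : diagonal d * σ.permMatrix R = diagonal d' * σ'.permMatrix R) : d = d' ∧ σ = σ' := by
  have key (i : ι) : d i = d' i * if σ' i = σ i then 1 else 0 := by
    simpa [diagonal_mul, PEquiv.toMatrix_apply] using congrFun (congrFun h i) (σ i)
  have hσ : σ = σ' := Equiv.ext fun i => by
    by_contra hne
    exact hd i (by simpa [Ne.symm hne] using key i)
  subst hσ
  exact ⟨funext fun i => by simpa using key i, rfl⟩

theorem IsPrimitiveRoot.eq_of_smul_pow_mul_pow_eq {K : Type*} [Field K] {ν ξ : K} {n N : ℕ}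
    (hν : IsPrimitiveRoot ν n) (hξ : IsPrimitiveRoot ξ N) (h3 : Nat.Coprime 3 N) [NeZero n]
    [NeZero N] {a a' b b' m m' : ℕ} (ha : a < n) (ha' : a' < n) (hb : b < n) (hb' : b' < n)
    (hm : m < N) (hm' : m' < N)
    (h : ξ ^ m • (![1, ν, ν⁻¹] ^ a * ![ν, ν⁻¹, 1] ^ b) =
      ξ ^ m' • (![1, ν, ν⁻¹] ^ a' * ![ν, ν⁻¹, 1] ^ b')) :
    m = m' ∧ a = a' ∧ b = b' := by
  have hν0 := hν.ne_zero (NeZero.ne n)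
  have hξ0 := hξ.ne_zero (NeZero.ne N)
  have h0 : ξ ^ m * ν ^ b = ξ ^ m' * ν ^ b' := by simpa using congrFun h 0
  have h1 : ξ ^ m * (ν ^ a * ν⁻¹ ^ b) = ξ ^ m' * (ν ^ a' * ν⁻¹ ^ b') := by
    simpa using congrFun h 1
  have h2 : ξ ^ m * ν⁻¹ ^ a = ξ ^ m' * ν⁻¹ ^ a' := by simpa using congrFun h 2
  have hcube (m a b : ℕ) :
      ξ ^ m * ν ^ b * (ξ ^ m * (ν ^ a * ν⁻¹ ^ b)) * (ξ ^ m * ν⁻¹ ^ a) =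
        (ξ ^ 3) ^ m := by
    rw [inv_pow, inv_pow]
    field_simp
    ring
  obtain rfl : m = m' :=
    (hξ.pow_of_coprime 3 h3).pow_inj hm hm' (by rw [← hcube m a b, h0, h1, h2, hcube])
  have hξm := pow_ne_zero m hξ0
  exact ⟨rfl, hν.inv.pow_inj ha ha' (mul_left_cancel₀ hξm h2),
    hν.pow_inj hb hb' (mul_left_cancel₀ hξm h0)⟩

section Presentation

variable {G : Type*} [Group G]

structure DeltaRelations (e l c f : G) : Prop where
  semiconjBy_e_l : SemiconjBy e l c
  semiconjBy_e_c : SemiconjBy e c (l * c)⁻¹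
  commute_l_c : Commute l c
  semiconjBy_f_l : SemiconjBy f l c⁻¹
  semiconjBy_f_c : SemiconjBy f c l⁻¹
  semiconjBy_f_e_sq : SemiconjBy f (e ^ 2) e

def deltaWord (e l c f : G) (x : ℤ × ℤ × ℕ × ℤ) : G :=
  l ^ x.1 * c ^ x.2.1 * f ^ x.2.2.1 * e ^ x.2.2.2

variable {e l c f : G}

theorem l_mul_deltaWord (a b : ℤ) (m : ℕ) (t : ℤ) :
    l * deltaWord e l c f (a, b, m, t) = deltaWord e l c f (a + 1, b, m, t) := by
  simp only [deltaWord]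
  group

namespace DeltaRelations

variable (h : DeltaRelations e l c f)
include h

theorem semiconjBy_e_zpow_mul_zpow (a b : ℤ) :
    SemiconjBy e (l ^ a * c ^ b) (l ^ (-b) * c ^ (a - b)) := by
  have key := (h.semiconjBy_e_l.zpow_right a).mul_right (h.semiconjBy_e_c.zpow_right b)
  rwa [_root_.inv_zpow', h.commute_l_c.mul_zpow, ← mul_assoc,
    ← (h.commute_l_c.zpow_zpow (-b) a).eq, mul_assoc, ← _root_.zpow_add,
    ← sub_eq_add_neg] at key

theorem semiconjBy_f_zpow_mul_zpow (a b : ℤ) :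
    SemiconjBy f (l ^ a * c ^ b) (l ^ (-b) * c ^ (-a)) := by
  have key := (h.semiconjBy_f_l.zpow_right a).mul_right (h.semiconjBy_f_c.zpow_right b)
  rwa [_root_.inv_zpow', _root_.inv_zpow', ← (h.commute_l_c.zpow_zpow (-b) (-a)).eq] at key

theorem semiconjBy_f_pow (m : ℕ) : SemiconjBy (f ^ m) (e ^ 2 ^ m) e := by
  induction m with
  | zero => simp
  | succ m ih =>
    rw [pow_succ f]
    refine ih.mul_left ?_
    have := h.semiconjBy_f_e_sq.pow_right (2 ^ m)
    rwa [← pow_mul, ← pow_succ'] at this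

theorem e_mul_deltaWord (a b : ℤ) (m : ℕ) (t : ℤ) :
    e * deltaWord e l c f (a, b, m, t) = deltaWord e l c f (-b, a - b, m, 2 ^ m + t) := by
  simp only [deltaWord]
  rw [← mul_assoc, ← mul_assoc, (h.semiconjBy_e_zpow_mul_zpow a b).eq, mul_assoc _ e,
    ← (h.semiconjBy_f_pow m).eq, _root_.zpow_add, ← zpow_natCast e (2 ^ m), Nat.cast_pow,
    Nat.cast_ofNat]
  group

theorem f_mul_deltaWord (a b : ℤ) (m : ℕ) (t : ℤ) :
    f * deltaWord e l c f (a, b, m, t) = deltaWord e l c f (-b, -a, m + 1, t) := by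
  simp only [deltaWord]
  rw [← mul_assoc, ← mul_assoc, (h.semiconjBy_f_zpow_mul_zpow a b).eq, pow_succ']
  group

theorem deltaWord_mem_closure (x : ℤ × ℤ × ℕ × ℤ) :
    deltaWord e l c f x ∈ Subgroup.closure {e, l, f} := by
  have he : e ∈ Subgroup.closure {e, l, f} := Subgroup.subset_closure (by simp)
  have hl : l ∈ Subgroup.closure {e, l, f} := Subgroup.subset_closure (by simp)
  have hf : f ∈ Subgroup.closure {e, l, f} := Subgroup.subset_closure (by simp)
  have hc : c ∈ Subgroup.closure {e, l, f} := by
    rw [eq_mul_inv_of_mul_eq h.semiconjBy_e_l.symm]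
    exact mul_mem (mul_mem he hl) (inv_mem he)
  exact mul_mem (mul_mem (mul_mem (zpow_mem hl _) (zpow_mem hc _)) (pow_mem hf _)) (zpow_mem he _)

theorem coe_closure_eq_range (he : IsOfFinOrder e) (hl : IsOfFinOrder l) (hf : IsOfFinOrder f) :
    (Subgroup.closure {e, l, f} : Set G) = Set.range (deltaWord e l c f) := by
  refine Subgroup.coe_closure_eq_of_isOfFinOrder (by simp [he, hl, hf])
    (Set.range_subset_iff.2 h.deltaWord_mem_closure) ⟨(0, 0, 0, 0), by simp [deltaWord]⟩ ?_
  rintro g hg _ ⟨⟨a, b, m, t⟩, rfl⟩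
  rcases hg with rfl | rfl | rfl
  · exact ⟨_, (h.e_mul_deltaWord a b m t).symm⟩
  · exact ⟨_, (l_mul_deltaWord a b m t).symm⟩
  · exact ⟨_, (h.f_mul_deltaWord a b m t).symm⟩

theorem nat_card_closure {n N : ℕ} [NeZero n] [NeZero N] (he : e ^ 3 = 1) (hl : l ^ n = 1)
    (hf : f ^ N = 1)
    (hinj : Function.Injective fun x : ZMod n × ZMod n × ZMod N × ZMod 3 =>
      deltaWord e l c f (x.1.val, x.2.1.val, x.2.2.1.val, x.2.2.2.val)) :
    Nat.card (Subgroup.closure {e, l, f}) = 3 * N * n ^ 2 := by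
  have hc : c ^ n = 1 := by
    have := (h.semiconjBy_e_l.pow_right n).eq
    rwa [hl, mul_one, right_eq_mul] at this
  have hrange : Set.range (deltaWord e l c f) =
      Set.range fun x : ZMod n × ZMod n × ZMod N × ZMod 3 =>
        deltaWord e l c f (x.1.val, x.2.1.val, x.2.2.1.val, x.2.2.2.val) := by
    refine subset_antisymm ?_ (Set.range_subset_iff.2 fun x => ⟨_, rfl⟩)
    rintro _ ⟨⟨a, b, m, t⟩, rfl⟩
    refine ⟨((a : ZMod n), (b : ZMod n), (m : ZMod N), (t : ZMod 3)), ?_⟩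
    simp only [deltaWord, zpow_natCast]
    rw [← zpow_eq_pow_val_intCast hl, ← zpow_eq_pow_val_intCast hc,
      ← pow_eq_pow_val_natCast hf, ← zpow_eq_pow_val_intCast he]
  have hfin {g : G} {k : ℕ} (hg : g ^ k = 1) (hk : 0 < k) : IsOfFinOrder g :=
    isOfFinOrder_iff_pow_eq_one.2 ⟨k, hk, hg⟩
  rw [← SetLike.coe_sort_coe, h.coe_closure_eq_range (hfin he three_pos) (hfin hl (NeZero.pos n))
    (hfin hf (NeZero.pos N)), hrange, Nat.card_range_of_injective hinj]
  simp only [Nat.card_prod, Nat.card_zmod]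
  ring

end DeltaRelations

end Presentation

theorem Ematrix_eq_permMatrix : Ematrix = (finRotate 3).permMatrix ℂ := by
  ext i j; fin_cases i <;> fin_cases j <;> simp [Ematrix, PEquiv.toMatrix_apply]

theorem neg_Fmatrix_zero (j : ℕ) :
    -Fmatrix 0 j = Complex.exp (2 * Real.pi * Complex.I / (2 ^ j : ℕ)) •
      (Equiv.swap 0 2).permMatrix ℂ := by
  rw [Fmatrix, pow_zero, one_mul, neg_smul, neg_neg, Nat.cast_pow, Nat.cast_ofNat]
  congr 1
  ext i j; fin_cases i <;> fin_cases j <;> simp [PEquiv.toMatrix_apply, Equiv.swap_apply_def]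

section Matrices

variable {ν ξ : ℂ} {E L F : GL (Fin 3) ℂ}
  (hE : E.val = (finRotate 3).permMatrix ℂ) (hL : L.val = diagonal ![1, ν, ν⁻¹])
  (hF : F.val = ξ • (Equiv.swap 0 2).permMatrix ℂ)

include hE in
theorem pow_three_eq_one_of_val_eq : E ^ 3 = 1 := by
  ext1
  rw [Units.val_pow_eq_pow_val, hE, ← permMatrix_pow, show finRotate 3 ^ 3 = 1 by decide,
    permMatrix_one, Units.val_one]

include hE hL in
theorem val_conj_eq_diagonal : (E * L * E⁻¹).val = diagonal ![ν, ν⁻¹, 1] := by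
  have hE3 := pow_three_eq_one_of_val_eq hE
  rw [inv_eq_of_mul_eq_one_right (by rw [← pow_succ', hE3] : E * E ^ 2 = 1)]
  simp only [Units.val_mul, hE, hL, pow_two]
  ext i j; fin_cases i <;> fin_cases j <;>
    simp [mul_apply, Fin.sum_univ_three, PEquiv.toMatrix_apply]

include hE hL hF in
theorem deltaRelations_of_val_eq (hν : ν ≠ 0) : DeltaRelations E L (E * L * E⁻¹) F := by
  have hC := val_conj_eq_diagonal hE hL
  refine ⟨by simp [SemiconjBy], ?_,
    Units.ext (by simp only [Units.val_mul, hL, hC, diagonal_mul_diagonal, mul_comm]), ?_, ?_, ?_⟩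
  all_goals
    try rw [SemiconjBy, eq_inv_mul_iff_mul_eq]
    ext1
    simp only [Units.val_mul, hE, hL, hF, hC, pow_two]
    ext i j; fin_cases i <;> fin_cases j <;>
      simp [mul_apply, Fin.sum_univ_three, PEquiv.toMatrix_apply, Equiv.swap_apply_def] <;>
      field_simp

include hE hL hF in
theorem deltaWord_val_eq (a b m t : ℕ) :
    (deltaWord E L (E * L * E⁻¹) F (a, b, m, t)).val =
      diagonal (ξ ^ m • (![1, ν, ν⁻¹] ^ a * ![ν, ν⁻¹, 1] ^ b)) *
        (finRotate 3 ^ t * Equiv.swap 0 2 ^ m).permMatrix ℂ := by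
  simp only [deltaWord, zpow_natCast, Units.val_mul, Units.val_pow_eq_pow_val, hE, hL, hF,
    val_conj_eq_diagonal hE hL, diagonal_pow, smul_pow, ← permMatrix_pow, permMatrix_mul,
    diagonal_mul_diagonal]
  rw [diagonal_smul, Matrix.mul_smul, Matrix.smul_mul, Matrix.smul_mul, mul_assoc]
  rfl

include hL in
theorem pow_eq_one_of_val_eq_diagonal {n : ℕ} (hν : ν ^ n = 1) : L ^ n = 1 := by
  ext1
  rw [Units.val_pow_eq_pow_val, hL, diagonal_pow, Units.val_one, ← diagonal_one]
  congr 1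
  ext i; fin_cases i <;> simp [hν]

include hF in
theorem pow_eq_one_of_val_eq_smul_permMatrix {N : ℕ} (hξ : ξ ^ N = 1) (hN : Even N) :
    F ^ N = 1 := by
  obtain ⟨r, rfl⟩ := hN
  ext1
  rw [Units.val_pow_eq_pow_val, hF, smul_pow, hξ, one_smul, ← permMatrix_pow, ← two_mul,
    pow_mul, sq, Equiv.swap_mul_self, one_pow, permMatrix_one, Units.val_one]

include hE hL hF in
theorem deltaWord_injective_of_val_eq {n N : ℕ} [NeZero n] [NeZero N] (hν : IsPrimitiveRoot ν n)
    (hξ : IsPrimitiveRoot ξ N) (h3 : Nat.Coprime 3 N) :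
    Function.Injective fun x : ZMod n × ZMod n × ZMod N × ZMod 3 =>
      deltaWord E L (E * L * E⁻¹) F (x.1.val, x.2.1.val, x.2.2.1.val, x.2.2.2.val) := by
  rintro ⟨a, b, m, t⟩ ⟨a', b', m', t'⟩ h
  have hν0 := hν.ne_zero (NeZero.ne n)
  have hξ0 := hξ.ne_zero (NeZero.ne N)
  replace h := congrArg Units.val h
  simp only [deltaWord_val_eq hE hL hF] at h
  obtain ⟨hd, hσ⟩ :=
    eq_of_diagonal_mul_permMatrix_eq (fun i => by fin_cases i <;> simp [hν0, hξ0]) h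
  obtain ⟨hm, ha, hb⟩ := hν.eq_of_smul_pow_mul_pow_eq hξ h3 (ZMod.val_lt a) (ZMod.val_lt a')
    (ZMod.val_lt b) (ZMod.val_lt b') (ZMod.val_lt m) (ZMod.val_lt m') hd
  obtain rfl := ZMod.val_injective _ hm
  have ht : ∀ t t' : ZMod 3, finRotate 3 ^ t.val = finRotate 3 ^ t'.val → t = t' := by decide
  rw [ZMod.val_injective _ ha, ZMod.val_injective _ hb, ht t t' (mul_right_cancel hσ)]

end Matrices

theorem delta_6n2j_order_general (n : ℕ) (hn : 2 ≤ n)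
    (j : ℕ) (hj : 0 < j)
    (E L F : GL (Fin 3) ℂ)
    (hE : E.val = Ematrix) (hL : L.val = Lmatrix n) (hF : F.val = -(Fmatrix 0 j)) :
    Nat.card ↥(Subgroup.closure ({E, L, F} : Set (GL (Fin 3) ℂ)))
      = 3 * 2 ^ j * n ^ 2 := by
  have : NeZero n := ⟨by omega⟩
  have hν := Complex.isPrimitiveRoot_exp n (by omega)
  have hξ := Complex.isPrimitiveRoot_exp (2 ^ j) (by positivity)
  rw [Ematrix_eq_permMatrix] at hE
  rw [neg_Fmatrix_zero] at hF
  exact (deltaRelations_of_val_eq hE hL hF (hν.ne_zero (by omega))).nat_card_closure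
    (pow_three_eq_one_of_val_eq hE) (pow_eq_one_of_val_eq_diagonal hL hν.pow_eq_one)
    (pow_eq_one_of_val_eq_smul_permMatrix hF hξ.pow_eq_one (Nat.even_pow.2 ⟨even_two, hj.ne'⟩))
    (deltaWord_injective_of_val_eq hE hL hF hν hξ (Nat.Coprime.pow_right _ (by norm_num)))

/-- The group `Δ(6n², j)`, generated by `E`, `L_n` and `−F_{0,j}` inside `GL(3,ℂ)`,
has order `3·2^j·n²`. -/
theorem delta_6n2j_order (n : ℕ) (hn : 2 ≤ n) (hn3 : ¬ 3 ∣ n)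
    (j : ℕ) (hj : 0 < j)
    (E L F : GL (Fin 3) ℂ)
    (hE : E.val = Ematrix) (hL : L.val = Lmatrix n) (hF : F.val = -(Fmatrix 0 j)) :
    Nat.card ↥(Subgroup.closure ({E, L, F} : Set (GL (Fin 3) ℂ)))
      = 3 * 2 ^ j * n ^ 2 :=
  delta_6n2j_order_general n hn j hj E L F hE hL hF
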